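/- Let X₁ and X₂ be independent real random variables with X₁ exponentially distributed with rate λ₁ > 0 and X₂ exponentially distributed with rate λ₂ > 0, and let α > 0 and σ² > 0. Then P(X₁ ≥ X₂ and X₁ > α(X₂ + σ²) and X₂ ≤ ασ²) = (λ₂/(λ₂ + αλ₁))·exp(−ασ²λ₁)·(1 − exp(−ασ²(λ₂ + αλ₁))). -/

import Mathlib

/-!
Condition on `X₂ = y`. The event forces `y ≤ ασ²`, and for such `y ≥ 0` the condition
`X₁ ≥ y` is implied by `X₁ > α(y + σ²)`, whose probability is the exponential tail
`exp(-λ₁α(y + σ²))`. Multiplying the density `λ₂ exp(-λ₂y)` by this tail gives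
`(λ₂/(λ₂ + αλ₁)) exp(-ασ²λ₁)` times the density of `Exp(λ₂ + αλ₁)`, so the probability is that
constant times the `Exp(λ₂ + αλ₁)` distribution function at `ασ²`.
-/

open MeasureTheory ProbabilityTheory Real Set

lemma expMeasure_eq_withDensity (r : ℝ) :
    expMeasure r = volume.withDensity (exponentialPDF r) := rfl

lemma measurable_exponentialPDF (r : ℝ) : Measurable (exponentialPDF r) :=
  (measurable_exponentialPDFReal r).ennreal_ofReal

lemma expMeasure_Ioi {r t : ℝ} (hr : 0 < r) (ht : 0 ≤ t) :
    expMeasure r (Ioi t) = ENNReal.ofReal (rexp (-(r * t))) := by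
  have := isProbabilityMeasure_expMeasure hr
  have hexp_le_one : rexp (-(r * t)) ≤ 1 := exp_le_one_iff.2 (by nlinarith)
  have hIic : expMeasure r (Iic t) = ENNReal.ofReal (1 - rexp (-(r * t))) := by
    rw [expMeasure_eq_withDensity, withDensity_apply _ measurableSet_Iic]
    exact (lintegral_exponentialPDF_eq_antiDeriv hr t).trans (if_pos ht ▸ rfl)
  rw [← compl_Iic, prob_compl_eq_one_sub measurableSet_Iic, hIic, ← ENNReal.ofReal_one,
    ← ENNReal.ofReal_sub _ (by linarith), sub_sub_cancel]

lemma exponentialPDF_mul_exp_neg {r s : ℝ} (hr : 0 ≤ r) (hrs : 0 < r + s) (y : ℝ) :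
    exponentialPDF r y * ENNReal.ofReal (rexp (-(s * y)))
      = ENNReal.ofReal (r / (r + s)) * exponentialPDF (r + s) y := by
  rcases lt_or_ge y 0 with hy | hy
  · simp [exponentialPDF_of_neg hy]
  rw [exponentialPDF_of_nonneg hy, exponentialPDF_of_nonneg hy,
    ← ENNReal.ofReal_mul (by positivity), ← ENNReal.ofReal_mul (by positivity)]
  congr 1
  rw [mul_assoc, ← exp_add]
  field_simp
  ring_nf

lemma ProbabilityTheory.IndepFun.measure_preimage_prodMk {Ω α β : Type*} [MeasurableSpace Ω]
    [MeasurableSpace α] [MeasurableSpace β] {μ : Measure Ω} [IsFiniteMeasure μ]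
    {X : Ω → α} {Y : Ω → β} (hXY : IndepFun X Y μ) (hX : Measurable X) (hY : Measurable Y)
    {S : Set (α × β)} (hS : MeasurableSet S) :
    μ ((fun ω ↦ (X ω, Y ω)) ⁻¹' S) = ((μ.map X).prod (μ.map Y)) S := by
  rw [← (indepFun_iff_map_prod_eq_prod_map_map hX.aemeasurable hY.aemeasurable).mp hXY,
    Measure.map_apply (hX.prodMk hY) hS]

lemma MeasureTheory.Measure.prod_withDensity_apply {α β : Type*} [MeasurableSpace α]
    [MeasurableSpace β] (ν : Measure α) [SFinite ν] (η : Measure β) [SFinite η]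
    {g : β → ENNReal} (hg : Measurable g) {S : Set (α × β)} (hS : MeasurableSet S) :
    (ν.prod (η.withDensity g)) S = ∫⁻ y, g y * ν ((fun x ↦ (x, y)) ⁻¹' S) ∂η := by
  rw [Measure.prod_apply_symm hS,
    lintegral_withDensity_eq_lintegral_mul η hg (measurable_measure_prodMk_right hS)]
  rfl

/-- Pairs `(x₁, x₂)` of received powers for which SIC decodes sensor 1 but not sensor 2. -/
def sicOnlyFirstDecoded (α σ2 : ℝ) : Set (ℝ × ℝ) :=
  {p | p.2 ≤ p.1 ∧ α * (p.2 + σ2) < p.1 ∧ p.2 ≤ α * σ2}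

lemma measurableSet_sicOnlyFirstDecoded (α σ2 : ℝ) :
    MeasurableSet (sicOnlyFirstDecoded α σ2) :=
  (measurableSet_le measurable_snd measurable_fst).inter <|
    (measurableSet_lt (by fun_prop) measurable_fst).inter
      (measurableSet_le measurable_snd measurable_const)

lemma sicOnlyFirstDecoded_section_of_le {α σ2 y : ℝ} (hα : 0 ≤ α) (hy : 0 ≤ y)
    (hyα : y ≤ α * σ2) :
    (fun x ↦ (x, y)) ⁻¹' sicOnlyFirstDecoded α σ2 = Ioi (α * (y + σ2)) := by
  ext x
  simp only [sicOnlyFirstDecoded, mem_preimage, mem_ofPred_eq, mem_Ioi]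
  refine ⟨fun h ↦ h.2.1, fun h ↦ ⟨?_, h, hyα⟩⟩
  nlinarith [mul_nonneg hα hy]

lemma sicOnlyFirstDecoded_section_of_lt {α σ2 y : ℝ} (hyα : α * σ2 < y) :
    (fun x ↦ (x, y)) ⁻¹' sicOnlyFirstDecoded α σ2 = ∅ :=
  eq_empty_of_forall_notMem fun _ h ↦ hyα.not_ge h.2.2

lemma exponentialPDF_mul_expMeasure_sicOnlyFirstDecoded_section {l1 l2 α σ2 : ℝ}
    (hl1 : 0 < l1) (hl2 : 0 < l2) (hα : 0 ≤ α) (y : ℝ) :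
    exponentialPDF l2 y * expMeasure l1 ((fun x ↦ (x, y)) ⁻¹' sicOnlyFirstDecoded α σ2)
      = (Iic (α * σ2)).indicator (fun y ↦ ENNReal.ofReal (l2 / (l2 + α * l1)
          * rexp (-(α * σ2 * l1))) * exponentialPDF (l2 + α * l1) y) y := by
  have hc : 0 < l2 + α * l1 := by positivity
  rcases lt_or_ge y 0 with hy | hy
  · simp [indicator_apply, exponentialPDF_of_neg hy]
  rcases le_or_gt y (α * σ2) with hyT | hyT
  · have hsplit : rexp (-(l1 * (α * (y + σ2))))
        = rexp (-(α * σ2 * l1)) * rexp (-(α * l1 * y)) := by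
      rw [← exp_add]; ring_nf
    rw [sicOnlyFirstDecoded_section_of_le hα hy hyT, expMeasure_Ioi hl1 (by nlinarith),
      indicator_of_mem (mem_Iic.2 hyT), hsplit, ENNReal.ofReal_mul (exp_nonneg _),
      mul_left_comm, exponentialPDF_mul_exp_neg hl2.le hc, ENNReal.ofReal_mul (by positivity)]
    ring
  · rw [sicOnlyFirstDecoded_section_of_lt hyT, measure_empty, mul_zero,
      indicator_of_notMem (notMem_Iic.2 hyT)]

/-- For independent `X₁ ~ Exp(λ₁)`, `X₂ ~ Exp(λ₂)`, `α > 0` and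
`σ² > 0`, the SIC joint probability that only sensor 1's packet is received with
`X₁ ≥ X₂` is
`P(X₁ ≥ X₂ ∧ X₁ > α(X₂+σ²) ∧ X₂ ≤ ασ²)
  = (λ₂/(λ₂+αλ₁))·exp(−ασ²λ₁)·(1 − exp(−ασ²(λ₂+αλ₁)))`. -/
theorem stmt_12 {Ω : Type*} [MeasureTheory.MeasureSpace Ω]
    (μ : Measure Ω) [IsProbabilityMeasure μ]
    (X1 X2 : Ω → ℝ) (hX1m : Measurable X1) (hX2m : Measurable X2)
    (l1 l2 : ℝ) (hl1 : 0 < l1) (hl2 : 0 < l2)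
    (hX1 : Measure.map X1 μ = expMeasure l1)
    (hX2 : Measure.map X2 μ = expMeasure l2)
    (hindep : IndepFun X1 X2 μ)
    (α σ2 : ℝ) (hα : 0 < α) (hσ2 : 0 < σ2) :
    μ {ω | X2 ω ≤ X1 ω ∧ X1 ω > α * (X2 ω + σ2) ∧ X2 ω ≤ α * σ2}
      = ENNReal.ofReal
          (l2 / (l2 + α * l1) * rexp (-(α * σ2 * l1))
            * (1 - rexp (-(α * σ2 * (l2 + α * l1))))) := by
  have := isProbabilityMeasure_expMeasure hl1
  have hS := measurableSet_sicOnlyFirstDecoded α σ2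
  calc μ {ω | X2 ω ≤ X1 ω ∧ X1 ω > α * (X2 ω + σ2) ∧ X2 ω ≤ α * σ2}
      = ((expMeasure l1).prod (expMeasure l2)) (sicOnlyFirstDecoded α σ2) := by
        rw [← hX1, ← hX2, ← hindep.measure_preimage_prodMk hX1m hX2m hS]
        rfl
    _ = ∫⁻ y in Iic (α * σ2), ENNReal.ofReal (l2 / (l2 + α * l1) * rexp (-(α * σ2 * l1)))
          * exponentialPDF (l2 + α * l1) y := by
        rw [expMeasure_eq_withDensity l2,
          Measure.prod_withDensity_apply _ _ (measurable_exponentialPDF l2) hS,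
          lintegral_congr (exponentialPDF_mul_expMeasure_sicOnlyFirstDecoded_section hl1 hl2 hα.le),
          lintegral_indicator measurableSet_Iic]
    _ = _ := by
        rw [lintegral_const_mul _ (measurable_exponentialPDF _),
          lintegral_exponentialPDF_eq_antiDeriv (by positivity), if_pos (by positivity),
          ← ENNReal.ofReal_mul (by positivity)]
        ring_nf
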